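/- arXiv:1411.5303 — 4 statements merged into one kernel-verified Lean document; each statement's English description precedes it below -/
import Mathlib

section
/- Let N ≥ 2 and h, φ ∈ C_c^∞(ℝ^N). Then ∫_{ℝ^N} det(D²h) φ dx = −(1/N!) Σ_{σ,τ ∈ S_N} sgn(σ) sgn(τ) ∫_{ℝ^N} (∂_{σ(1)} h)(∂_{τ(1)} h)(∂_{σ(2)}∂_{τ(2)} φ) (∂_{σ(3)}∂_{τ(3)} h) ⋯ (∂_{σ(N)}∂_{τ(N)} h) dx, where S_N is the symmetric group on {1,…,N} and the product over indices 3,…,N is empty when N = 2. -/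
open MeasureTheory Real Filter

noncomputable section

abbrev Eu (N : ℕ) : Type := EuclideanSpace ℝ (Fin N)

def ebasis {N : ℕ} (i : Fin N) : Eu N := EuclideanSpace.single i 1

/-- Partial derivative `∂ᵢ u (x)`. -/
def pd {N : ℕ} (u : Eu N → ℝ) (i : Fin N) (x : Eu N) : ℝ :=
  fderiv ℝ u x (ebasis i)

/-- Second partial derivative `∂ᵢ∂ⱼ u (x)`. -/
def pd2 {N : ℕ} (u : Eu N → ℝ) (i j : Fin N) (x : Eu N) : ℝ :=
  fderiv ℝ (fun y => fderiv ℝ u y (ebasis j)) x (ebasis i)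

/-- The determinant of the Hessian matrix `det (D²u)(x)`. -/
def hessDet {N : ℕ} (u : Eu N → ℝ) (x : Eu N) : ℝ :=
  (Matrix.of fun i j => pd2 u i j x).det

/-- The Besov norm `‖u‖_{s,p}`. -/
def besov (N : ℕ) (s p : ℝ) (u : Eu N → ℝ) : ℝ :=
  (∫ x : Eu N, |u x| ^ p) ^ (1/p)
  + (∫ x : Eu N, ‖fderiv ℝ u x‖ ^ p) ^ (1/p)
  + (∫ x : Eu N, ∫ y : Eu N,
      ‖fderiv ℝ u x - fderiv ℝ u y‖ ^ p / ‖x - y‖ ^ ((N : ℝ) + (s-1)*p)) ^ (1/p)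

/-!
Expanding the determinant in both rows and columns gives
`N! det D²h = Σ_{σ,τ} sgn σ sgn τ ∏ᵢ ∂_{σ(i)}∂_{τ(i)} h`. Integrate by parts twice: first
move `∂_{σ(1)}` off the first Hessian factor, then `∂_{τ(2)}` off the second. Each time, a term
in which the derivative falls on another factor `∂_{σ(j)}∂_{τ(j)} h` (or, the second time, on
`∂_{τ(1)} h`) contains a third derivative symmetric in two values of the same permutation, so it
is invariant under a transposition of that permutation and cancels in the signed sum; only the
term where the derivative falls on `φ` survives. Reindexing `σ ↦ σ ∘ (1 2)` then gives the
stated form.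
-/

open scoped ContDiff
open Finset Equiv

section SignedSums

variable {α : Type*} [Fintype α] [DecidableEq α]

theorem sum_sign_mul_comp_mul_swap {R : Type*} [Ring R] (F : Perm α → R) {a b : α}
    (hab : a ≠ b) :
    ∑ σ : Perm α, ((Perm.sign σ : ℤ) : R) * F (σ * swap a b) =
      -∑ σ : Perm α, ((Perm.sign σ : ℤ) : R) * F σ := by
  rw [← Equiv.sum_comp (Equiv.mulRight (swap a b)), ← Finset.sum_neg_distrib]
  refine Finset.sum_congr rfl fun σ _ => ?_
  simp [Perm.sign_mul, Perm.sign_swap hab]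

theorem sum_sign_mul_eq_zero_of_mul_swap {R : Type*} [Ring R] [IsAddTorsionFree R]
    {F : Perm α → R} {a b : α} (hab : a ≠ b) (hF : ∀ σ, F (σ * swap a b) = F σ) :
    ∑ σ : Perm α, ((Perm.sign σ : ℤ) : R) * F σ = 0 := by
  have h := sum_sign_mul_comp_mul_swap F hab
  simp only [hF] at h
  exact self_eq_neg.mp h

variable {R : Type*} [CommRing R]

def bisignedSum (F : Perm α → Perm α → R) : R :=
  ∑ σ : Perm α, ∑ τ : Perm α, ((Perm.sign σ : ℤ) : R) * ((Perm.sign τ : ℤ) : R) * F σ τ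

theorem bisignedSum_eq_neg_of_left {F G : Perm α → Perm α → R}
    (h : ∀ τ, ∑ σ : Perm α, ((Perm.sign σ : ℤ) : R) * F σ τ =
      -∑ σ : Perm α, ((Perm.sign σ : ℤ) : R) * G σ τ) :
    bisignedSum F = -bisignedSum G := by
  have hcomm : ∀ F : Perm α → Perm α → R, bisignedSum F =
        ∑ τ : Perm α, ((Perm.sign τ : ℤ) : R) * ∑ σ : Perm α, ((Perm.sign σ : ℤ) : R) * F σ τ := by
    intro F
    rw [bisignedSum, Finset.sum_comm]
    simp only [Finset.mul_sum]
    exact Finset.sum_congr rfl fun _ _ => Finset.sum_congr rfl fun _ _ => by ring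
  simp only [hcomm, h, mul_neg, Finset.sum_neg_distrib]

theorem bisignedSum_eq_neg_of_right {F G : Perm α → Perm α → R}
    (h : ∀ σ, ∑ τ : Perm α, ((Perm.sign τ : ℤ) : R) * F σ τ =
      -∑ τ : Perm α, ((Perm.sign τ : ℤ) : R) * G σ τ) :
    bisignedSum F = -bisignedSum G := by
  simp only [bisignedSum, mul_assoc, ← Finset.mul_sum, h, mul_neg, Finset.sum_neg_distrib]

theorem bisignedSum_comp_mul_swap (F : Perm α → Perm α → R) {a b : α} (hab : a ≠ b) :
    bisignedSum (fun σ τ => F (σ * swap a b) τ) = -bisignedSum F :=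
  bisignedSum_eq_neg_of_left fun τ => sum_sign_mul_comp_mul_swap (F · τ) hab

theorem bisignedSum_prod_eq_factorial_mul_det (M : Matrix α α R) :
    bisignedSum (fun σ τ => ∏ i, M (σ i) (τ i)) = (Fintype.card α).factorial * M.det := by
  have hrow : ∀ τ : Perm α,
      ∑ σ : Perm α, ((Perm.sign σ : ℤ) : R) * ((Perm.sign τ : ℤ) : R) * ∏ i, M (σ i) (τ i) =
        M.det := by
    intro τ
    rw [M.det_apply', ← Equiv.sum_comp (Equiv.mulRight τ)]
    refine Finset.sum_congr rfl fun ρ _ => ?_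
    have hprod : ∏ i, M ((ρ * τ) i) (τ i) = ∏ i, M (ρ i) i :=
      Fintype.prod_equiv τ _ _ fun _ => rfl
    have hsq : ((Perm.sign τ : ℤ) : R) * ((Perm.sign τ : ℤ) : R) = 1 := by
      rw [← Int.cast_mul, ← Units.val_mul, Int.units_mul_self, Units.val_one, Int.cast_one]
    change ((Perm.sign (ρ * τ) : ℤ) : R) * _ * ∏ i, M ((ρ * τ) i) (τ i) = _
    rw [hprod, Perm.sign_mul, Units.val_mul, Int.cast_mul]
    linear_combination ((Perm.sign ρ : ℤ) : R) * (∏ i, M (ρ i) i) * hsq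
  rw [bisignedSum, Finset.sum_comm, Finset.sum_congr rfl fun τ _ => hrow τ]
  simp [Fintype.card_perm]

end SignedSums

section Calculus

variable {N : ℕ}

theorem ContDiff.pd {u : Eu N → ℝ} (hu : ContDiff ℝ ∞ u) (i : Fin N) : ContDiff ℝ ∞ (pd u i) :=
  (hu.fderiv_right le_rfl).clm_apply contDiff_const

theorem HasCompactSupport.pd {u : Eu N → ℝ} (hu : HasCompactSupport u) (i : Fin N) :
    HasCompactSupport (pd u i) :=
  (hu.fderiv ℝ).comp_left (g := fun L : Eu N →L[ℝ] ℝ => L (ebasis i)) rfl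

theorem pd2_comm {u : Eu N → ℝ} (hu : ContDiff ℝ 2 u) (i j : Fin N) : pd2 u i j = pd2 u j i := by
  have hpd2 : ∀ i j x, pd2 u i j x = fderiv ℝ (fderiv ℝ u) x (ebasis i) (ebasis j) := by
    intro i j x
    have hd : DifferentiableAt ℝ (fderiv ℝ u) x :=
      (hu.fderiv_right (m := 1) le_rfl).differentiable one_ne_zero x
    simp only [pd2, fderiv_clm_apply hd (differentiableAt_const (ebasis j)), fderiv_const_apply]
    simp
  funext x
  rw [hpd2, hpd2]
  exact hu.contDiffAt.isSymmSndFDerivAt (by simp) _ _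

theorem pd_mul {f g : Eu N → ℝ} {x : Eu N} (hf : DifferentiableAt ℝ f x)
    (hg : DifferentiableAt ℝ g x) (i : Fin N) :
    pd (fun y => f y * g y) i x = pd f i x * g x + f x * pd g i x := by
  simp only [pd, fderiv_fun_mul hf hg, add_apply, smul_apply, smul_eq_mul]
  ring

theorem pd_prod {ι : Type*} [DecidableEq ι] {s : Finset ι} {w : ι → Eu N → ℝ} {x : Eu N}
    (hw : ∀ j ∈ s, DifferentiableAt ℝ (w j) x) (i : Fin N) :
    pd (fun y => ∏ j ∈ s, w j y) i x = ∑ j ∈ s, pd (w j) i x * ∏ k ∈ s.erase j, w k x := by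
  simp only [pd, fderiv_finsetProd hw, FunLike.coe_sum, Finset.sum_apply,
    smul_apply, smul_eq_mul, mul_comm]

theorem integral_mul_pd_eq_neg {f g : Eu N → ℝ} (hf : ContDiff ℝ 1 f)
    (hfs : HasCompactSupport f) (hg : ContDiff ℝ 1 g) (i : Fin N) :
    ∫ x, f x * pd g i x = -∫ x, pd f i x * g x := by
  have hf' : Continuous (pd f i) :=
    (hf.continuous_fderiv one_ne_zero).clm_apply continuous_const
  have hg' : Continuous (pd g i) :=
    (hg.continuous_fderiv one_ne_zero).clm_apply continuous_const
  exact integral_mul_fderiv_eq_neg_fderiv_mul_of_integrable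
    ((hf'.mul hg.continuous).integrable_of_hasCompactSupport (hfs.pd i).mul_right)
    ((hf.continuous.mul hg').integrable_of_hasCompactSupport hfs.mul_right)
    ((hf.continuous.mul hg.continuous).integrable_of_hasCompactSupport hfs.mul_right)
    (fun x _ => hf.differentiable one_ne_zero x) (fun x _ => hg.differentiable one_ne_zero x)

theorem integral_mul_pd_mul_prod {ι : Type*} [DecidableEq ι] {ψ v : Eu N → ℝ} {s : Finset ι}
    {w : ι → Eu N → ℝ} (hψ : ContDiff ℝ ∞ ψ) (hψs : HasCompactSupport ψ) (hv : ContDiff ℝ ∞ v)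
    (hw : ∀ j ∈ s, ContDiff ℝ ∞ (w j)) (c : Fin N) :
    ∫ x, ψ x * pd v c x * ∏ i ∈ s, w i x =
      -(∫ x, pd ψ c x * v x * ∏ i ∈ s, w i x) -
        ∑ j ∈ s, ∫ x, ψ x * v x * pd (w j) c x * ∏ i ∈ s.erase j, w i x := by
  have hP : ContDiff ℝ ∞ fun x => ∏ i ∈ s, w i x := contDiff_prod hw
  have hψc := (hψ.pd c).continuous
  have hvc := hv.continuous
  have hwc : ∀ j ∈ s, Continuous (pd (w j) c) := fun j hj => ((hw j hj).pd c).continuous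
  have hleibniz : ∀ x, pd (fun y => ψ y * ∏ i ∈ s, w i y) c x * v x =
      pd ψ c x * v x * ∏ i ∈ s, w i x +
        ∑ j ∈ s, ψ x * v x * pd (w j) c x * ∏ i ∈ s.erase j, w i x := by
    intro x
    rw [pd_mul (hψ.differentiable (by simp) x) (hP.differentiable (by simp) x),
      pd_prod fun j hj => (hw j hj).differentiable (by simp) x, Finset.mul_sum, add_mul,
      Finset.sum_mul]
    congr 1
    · ring
    · exact Finset.sum_congr rfl fun j _ => by ring
  calc ∫ x, ψ x * pd v c x * ∏ i ∈ s, w i x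
      = ∫ x, (ψ x * ∏ i ∈ s, w i x) * pd v c x := by congr 1; ext x; ring
    _ = -∫ x, pd (fun y => ψ y * ∏ i ∈ s, w i y) c x * v x :=
      integral_mul_pd_eq_neg ((hψ.mul hP).of_le (by simp)) hψs.mul_right (hv.of_le (by simp)) c
    _ = -(∫ x, pd ψ c x * v x * ∏ i ∈ s, w i x) -
          ∑ j ∈ s, ∫ x, ψ x * v x * pd (w j) c x * ∏ i ∈ s.erase j, w i x := by
      have hint : ∀ j ∈ s,
          Integrable fun x => ψ x * v x * pd (w j) c x * ∏ i ∈ s.erase j, w i x :=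
        fun j hj => Continuous.integrable_of_hasCompactSupport
          (by
            have := hwc j hj
            have := continuous_finsetProd (s.erase j) fun i hi =>
              (hw i (Finset.mem_of_mem_erase hi)).continuous
            fun_prop)
          hψs.mul_right.mul_right.mul_right
      simp only [hleibniz]
      rw [integral_add _ (integrable_finsetSum s hint), integral_finsetSum s hint, neg_add,
        sub_eq_add_neg]
      exact Continuous.integrable_of_hasCompactSupport (by have := hP.continuous; fun_prop)
        (hψs.pd c).mul_right.mul_right

theorem sum_sign_mul_integral_mul_pd_mul_prod_eq_neg {ψ v : Eu N → ℝ} {u : Fin N → Eu N → ℝ}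
    {a : Fin N} {s : Finset (Fin N)} (ha : a ∉ s) (hψ : ContDiff ℝ ∞ ψ)
    (hψs : HasCompactSupport ψ) (hv : ContDiff ℝ ∞ v) (hu : ∀ i ∈ s, ContDiff ℝ ∞ (u i)) :
    ∑ σ : Perm (Fin N), ((Perm.sign σ : ℤ) : ℝ) *
        ∫ x, ψ x * pd v (σ a) x * ∏ i ∈ s, pd (u i) (σ i) x =
      -∑ σ : Perm (Fin N), ((Perm.sign σ : ℤ) : ℝ) *
        ∫ x, pd ψ (σ a) x * v x * ∏ i ∈ s, pd (u i) (σ i) x := by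
  have hcancel : ∑ σ : Perm (Fin N), ∑ j ∈ s, ((Perm.sign σ : ℤ) : ℝ) *
      ∫ x, ψ x * v x * pd (pd (u j) (σ j)) (σ a) x * ∏ i ∈ s.erase j, pd (u i) (σ i) x = 0 := by
    rw [Finset.sum_comm]
    refine Finset.sum_eq_zero fun j hj => ?_
    have haj : a ≠ j := fun h => ha (h ▸ hj)
    refine sum_sign_mul_eq_zero_of_mul_swap haj fun σ => ?_
    have hfix : ∀ i ∈ s.erase j, σ (swap a j i) = σ i := fun i hi =>
      congrArg σ <| swap_apply_of_ne_of_ne (fun h => ha (h ▸ mem_of_mem_erase hi))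
        (ne_of_mem_erase hi)
    have hsymm : pd (pd (u j) (σ a)) (σ j) = pd (pd (u j) (σ j)) (σ a) :=
      pd2_comm ((hu j hj).of_le (WithTop.coe_le_coe.mpr le_top)) (σ j) (σ a)
    simp only [Perm.mul_apply, swap_apply_left, swap_apply_right, hsymm]
    congr 1
    ext x
    rw [Finset.prod_congr rfl fun i hi => by rw [hfix i hi]]
  have hibp := fun σ : Perm (Fin N) =>
    integral_mul_pd_mul_prod (s := s) (w := fun i => pd (u i) (σ i)) hψ hψs hv
      (fun j hj => (hu j hj).pd (σ j)) (σ a)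
  beta_reduce at hibp
  simp only [hibp, mul_sub, mul_neg, Finset.mul_sum, Finset.sum_sub_distrib,
    Finset.sum_neg_distrib, hcancel, sub_zero]

end Calculus

section HessianDeterminant

variable {N : ℕ} {h φ : Eu N → ℝ}

theorem ContDiff.pd2 (hh : ContDiff ℝ ∞ h) (i j : Fin N) : ContDiff ℝ ∞ (pd2 h i j) :=
  (hh.pd j).pd i

theorem factorial_mul_integral_hessDet_mul (hh : ContDiff ℝ ∞ h) (hφ : Continuous φ)
    (hφs : HasCompactSupport φ) :
    (N.factorial : ℝ) * ∫ x, hessDet h x * φ x =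
      bisignedSum fun σ τ => ∫ x, φ x * ∏ i, pd2 h (σ i) (τ i) x := by
  have hint : ∀ σ τ : Perm (Fin N), Integrable fun x => φ x * ∏ i, pd2 h (σ i) (τ i) x :=
    fun σ τ => Continuous.integrable_of_hasCompactSupport
      (hφ.mul (continuous_finsetProd _ fun i _ => (hh.pd2 (σ i) (τ i)).continuous)) hφs.mul_right
  have hpoint : ∀ x, (N.factorial : ℝ) * (hessDet h x * φ x) =
      ∑ σ : Perm (Fin N), ∑ τ : Perm (Fin N),
        ((Perm.sign σ : ℤ) : ℝ) * ((Perm.sign τ : ℤ) : ℝ) * (φ x * ∏ i, pd2 h (σ i) (τ i) x) := by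
    intro x
    have hdet := bisignedSum_prod_eq_factorial_mul_det (Matrix.of fun i j => pd2 h i j x)
    rw [Fintype.card_fin] at hdet
    rw [hessDet, ← mul_assoc, ← hdet, bisignedSum, Finset.sum_mul]
    refine Finset.sum_congr rfl fun σ _ => ?_
    rw [Finset.sum_mul]
    exact Finset.sum_congr rfl fun τ _ => by simp only [Matrix.of_apply]; ring
  rw [← integral_const_mul, funext hpoint, integral_finsetSum _ fun σ _ =>
    integrable_finsetSum _ fun τ _ => (hint σ τ).const_mul _]
  refine Finset.sum_congr rfl fun σ _ => ?_
  rw [integral_finsetSum _ fun τ _ => (hint σ τ).const_mul _]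
  exact Finset.sum_congr rfl fun τ _ => integral_const_mul _ _

theorem bisignedSum_integral_mul_prod_pd2 (hh : ContDiff ℝ ∞ h) (hφ : ContDiff ℝ ∞ φ)
    (hφs : HasCompactSupport φ) (a : Fin N) :
    (bisignedSum fun σ τ => ∫ x, φ x * ∏ i, pd2 h (σ i) (τ i) x) =
      -bisignedSum fun σ τ =>
        ∫ x, pd φ (σ a) x * pd h (τ a) x * ∏ i ∈ univ.erase a, pd2 h (σ i) (τ i) x := by
  refine bisignedSum_eq_neg_of_left fun τ => ?_
  have hsplit : ∀ (σ : Perm (Fin N)) x, φ x * ∏ i, pd2 h (σ i) (τ i) x =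
      φ x * pd (pd h (τ a)) (σ a) x * ∏ i ∈ univ.erase a, pd (pd h (τ i)) (σ i) x := by
    intro σ x
    rw [← Finset.mul_prod_erase univ _ (mem_univ a), mul_assoc]
    rfl
  simp only [hsplit]
  exact sum_sign_mul_integral_mul_pd_mul_prod_eq_neg (u := fun i => pd h (τ i))
    (notMem_erase a univ) hφ hφs (hh.pd _) fun i _ => hh.pd _

theorem bisignedSum_integral_pd_mul_prod_pd2 (hh : ContDiff ℝ ∞ h) (hφ : ContDiff ℝ ∞ φ)
    (hφs : HasCompactSupport φ) {a b : Fin N} (hab : a ≠ b) :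
    (bisignedSum fun σ τ =>
      ∫ x, pd φ (σ a) x * pd h (τ a) x * ∏ i ∈ univ.erase a, pd2 h (σ i) (τ i) x) =
      -bisignedSum fun σ τ => ∫ x, pd2 φ (τ b) (σ a) x * pd h (σ b) x * pd h (τ a) x *
        ∏ i ∈ (univ.erase a).erase b, pd2 h (σ i) (τ i) x := by
  refine bisignedSum_eq_neg_of_right fun σ => ?_
  -- `∂_{τ(a)} h` becomes one more factor `∂_{τ(a)} (u a)` of the product, with `u a = h`.
  set u := Function.update (fun i => pd h (σ i)) a h with hu_def
  have hu : ∀ i ∈ univ.erase b, ContDiff ℝ ∞ (u i) := by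
    intro i _
    rcases eq_or_ne i a with rfl | hi
    · simpa [u] using hh
    · simpa [u, hi] using hh.pd (σ i)
  have hprod : ∀ (τ : Perm (Fin N)) x, ∏ i ∈ univ.erase b, pd (u i) (τ i) x =
      pd h (τ a) x * ∏ i ∈ (univ.erase a).erase b, pd2 h (σ i) (τ i) x := by
    intro τ x
    rw [← Finset.mul_prod_erase _ _ (mem_erase.2 ⟨hab, mem_univ a⟩), erase_right_comm]
    congr 1
    · simp [u]
    · refine Finset.prod_congr rfl fun i hi => ?_
      rw [hu_def, Function.update_of_ne (ne_of_mem_erase (mem_of_mem_erase hi)),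
        pd2_comm (hh.of_le (WithTop.coe_le_coe.mpr le_top))]
      rfl
  have hlhs : ∀ (τ : Perm (Fin N)) x,
      pd φ (σ a) x * pd h (τ a) x * ∏ i ∈ univ.erase a, pd2 h (σ i) (τ i) x =
        pd φ (σ a) x * pd (pd h (σ b)) (τ b) x * ∏ i ∈ univ.erase b, pd (u i) (τ i) x := by
    intro τ x
    rw [hprod, ← Finset.mul_prod_erase _ _ (mem_erase.2 ⟨hab.symm, mem_univ b⟩),
      pd2_comm (hh.of_le (WithTop.coe_le_coe.mpr le_top))]
    change _ = _ * pd2 h (τ b) (σ b) x * _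
    ring
  have hrhs : ∀ (τ : Perm (Fin N)) x,
      pd2 φ (τ b) (σ a) x * pd h (σ b) x * pd h (τ a) x *
          ∏ i ∈ (univ.erase a).erase b, pd2 h (σ i) (τ i) x =
        pd (pd φ (σ a)) (τ b) x * pd h (σ b) x * ∏ i ∈ univ.erase b, pd (u i) (τ i) x := by
    intro τ x
    rw [hprod, ← mul_assoc]
    rfl
  simp only [hlhs, hrhs]
  exact sum_sign_mul_integral_mul_pd_mul_prod_eq_neg (notMem_erase b univ) (hφ.pd _) (hφs.pd _)
    (hh.pd _) hu

theorem bisignedSum_integral_pd2_mul_pd_mul_pd (hφ : ContDiff ℝ 2 φ) {a b : Fin N}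
    (hab : a ≠ b) :
    (bisignedSum fun σ τ => ∫ x, pd2 φ (τ b) (σ a) x * pd h (σ b) x * pd h (τ a) x *
        ∏ i ∈ (univ.erase a).erase b, pd2 h (σ i) (τ i) x) =
      -bisignedSum fun σ τ => ∫ x, pd h (σ a) x * pd h (τ a) x * pd2 φ (σ b) (τ b) x *
        ∏ i ∈ (univ.erase a).erase b, pd2 h (σ i) (τ i) x := by
  rw [← bisignedSum_comp_mul_swap _ hab]
  congr 1
  ext σ τ
  congr 1
  ext x
  have hprod : ∏ i ∈ (univ.erase a).erase b, pd2 h (σ (swap a b i)) (τ i) x =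
      ∏ i ∈ (univ.erase a).erase b, pd2 h (σ i) (τ i) x :=
    Finset.prod_congr rfl fun i hi => by
      rw [swap_apply_of_ne_of_ne (ne_of_mem_erase (mem_of_mem_erase hi)) (ne_of_mem_erase hi)]
  simp only [Perm.mul_apply, swap_apply_left, swap_apply_right, hprod, pd2_comm hφ (τ b) (σ a)]
  ring

end HessianDeterminant

/-- The integration-by-parts identity for the Hessian determinant:
`∫ det(D²h) φ = −(1/N!) Σ_{σ,τ} sgn σ sgn τ ∫ (∂_{σ1}h)(∂_{τ1}h)(∂_{σ2}∂_{τ2}φ)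
  Π_{i≥3} (∂_{σi}∂_{τi}h)`. -/
theorem stmt6 (N : ℕ) (hN : 2 ≤ N) (h φ : Eu N → ℝ)
    (hh : ContDiff ℝ (⊤ : ℕ∞) h)
    (hφ : ContDiff ℝ (⊤ : ℕ∞) φ) (hφs : HasCompactSupport φ) :
    ∫ x : Eu N, hessDet h x * φ x =
      -(1 / (N.factorial : ℝ)) *
        ∑ σ : Equiv.Perm (Fin N), ∑ τ : Equiv.Perm (Fin N),
          ((Equiv.Perm.sign σ : ℤ) : ℝ) * ((Equiv.Perm.sign τ : ℤ) : ℝ) *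
            ∫ x : Eu N,
              pd h (σ ⟨0, by omega⟩) x * pd h (τ ⟨0, by omega⟩) x *
              pd2 φ (σ ⟨1, by omega⟩) (τ ⟨1, by omega⟩) x *
              ∏ i ∈ Finset.filter (fun i : Fin N => 2 ≤ (i : ℕ)) Finset.univ,
                pd2 h (σ i) (τ i) x := by
  have h01 : (⟨0, by omega⟩ : Fin N) ≠ ⟨1, hN⟩ := by simp
  have hK : Finset.filter (fun i : Fin N => 2 ≤ (i : ℕ)) Finset.univ =
      (univ.erase ⟨0, by omega⟩).erase ⟨1, hN⟩ := by
    ext i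
    simp only [mem_filter, mem_univ, true_and, mem_erase, ne_eq, Fin.ext_iff, and_true]
    omega
  have hexpand := factorial_mul_integral_hessDet_mul hh hφ.continuous hφs
  rw [bisignedSum_integral_mul_prod_pd2 hh hφ hφs ⟨0, by omega⟩,
    bisignedSum_integral_pd_mul_prod_pd2 hh hφ hφs h01,
    bisignedSum_integral_pd2_mul_pd_mul_pd (hφ.of_le (WithTop.coe_le_coe.mpr le_top)) h01,
    neg_neg, ← hK] at hexpand
  rw [bisignedSum] at hexpand
  field_simp
  linarith
end
end

section
/- Let N ≥ 2 and let h ∈ C_c^∞((0,1)) satisfy ∫₀¹ h(r) dr = 0. Define g : ℝ^N → ℝ by g(x) = ∫₀^{|x|} h(s) ds. Then g ∈ C_c^∞(ℝ^N) with support contained in the closed unit ball, and ∫_{ℝ^N} det(D²g)(x) |x|² dx = −(2 ω_{N−1} / N) ∫₀¹ h(r)^N r dr, where ω_{N−1} is the surface measure of the unit sphere S^{N−1} ⊂ ℝ^N. -/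
open MeasureTheory Real Filter

noncomputable section

open scoped RealInnerProductSpace Topology

/-! With `G' = h` and `A t = h t / t`, the gradient of `g = G ∘ ‖·‖` is `A(|x|) x`, so away from
the origin its Hessian is `A I + (A'(|x|) / |x|) x xᵀ`, whose determinant is
`A^{N-1} (A + |x| A') = (h / |x|)^{N-1} h'` by the matrix determinant lemma. Polar coordinates
turn the integral into `N |B₁| ∫₀¹ h^{N-1} h' r² dr`, and integrating `(h^N)' / N` by parts
against `r²` (no boundary terms, as `h 1 = 0`) gives `-(2/N) ∫₀¹ h^N r dr`. The function `g`
vanishes near the origin because `h` does, and outside the unit ball because `∫₀¹ h = 0`. -/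

section OneVariable

variable {h : ℝ → ℝ}

theorem ContDiff.primitive {n : ℕ∞} (hh : ContDiff ℝ n h) :
    ContDiff ℝ n fun r => ∫ s in (0 : ℝ)..r, h s := by
  have hderiv : ∀ r, HasDerivAt (fun r => ∫ s in (0 : ℝ)..r, h s) (h r) r := fun r =>
    (hh.continuous.integral_hasStrictDerivAt 0 r).hasDerivAt
  have hsucc : ContDiff ℝ (n + 1) fun r => ∫ s in (0 : ℝ)..r, h s := by
    refine contDiff_succ_iff_deriv.2 ⟨fun r => (hderiv r).differentiableAt, by simp, ?_⟩
    rwa [show deriv _ = h from funext fun r => (hderiv r).deriv]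
  exact hsucc.of_le (by exact_mod_cast le_self_add)

theorem primitive_eventuallyEq_zero (h0 : h =ᶠ[𝓝 0] 0) :
    (fun r => ∫ s in (0 : ℝ)..r, h s) =ᶠ[𝓝 0] 0 := by
  obtain ⟨ε, hε, hball⟩ := Metric.eventually_nhds_iff_ball.1 h0
  filter_upwards [Metric.ball_mem_nhds 0 hε] with r hr
  refine (intervalIntegral.integral_congr fun s hs => ?_).trans intervalIntegral.integral_zero
  refine hball s (mem_ball_zero_iff.2 ?_)
  have hsr := Set.abs_sub_left_of_mem_uIcc hs
  rw [sub_zero, sub_zero] at hsr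
  exact hsr.trans_lt (mem_ball_zero_iff.1 hr)

theorem primitive_eq_zero_of_one_le (hh : Continuous h) (hout : ∀ t, 1 ≤ t → h t = 0)
    (hint : ∫ s in (0 : ℝ)..1, h s = 0) {r : ℝ} (hr : 1 ≤ r) :
    ∫ s in (0 : ℝ)..r, h s = 0 := by
  have htail : ∫ s in (1 : ℝ)..r, h s = 0 := by
    refine (intervalIntegral.integral_congr fun s hs => ?_).trans intervalIntegral.integral_zero
    exact hout s (by rw [Set.uIcc_of_le hr] at hs; exact hs.1)
  rw [← intervalIntegral.integral_add_adjacent_intervals (hh.intervalIntegrable 0 1)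
    (hh.intervalIntegrable 1 r), hint, htail, add_zero]

theorem add_mul_deriv_div_self {t : ℝ} (hh : DifferentiableAt ℝ h t) (ht : t ≠ 0) :
    h t / t + t * deriv (fun s => h s / s) t = deriv h t := by
  rw [deriv_fun_div hh differentiableAt_fun_id ht, deriv_id'']
  field_simp
  ring

theorem setIntegral_Ioi_eq_intervalIntegral {f : ℝ → ℝ} {a b : ℝ} (hab : a ≤ b)
    (hf : ∀ t, b < t → f t = 0) :
    ∫ t in Set.Ioi a, f t = ∫ t in a..b, f t := by
  rw [intervalIntegral.integral_of_le hab]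
  refine setIntegral_eq_of_subset_of_forall_sdiff_eq_zero measurableSet_Ioi
    Set.Ioc_subset_Ioi_self fun t ht => hf t ?_
  by_contra! htb
  exact ht.2 ⟨ht.1, htb⟩

theorem integral_pow_mul_deriv_mul_sq (hh : ContDiff ℝ 1 h) (h1 : h 1 = 0)
    {N : ℕ} (hN : N ≠ 0) :
    ∫ t in (0 : ℝ)..1, h t ^ (N - 1) * deriv h t * t ^ 2 =
      -(2 / N) * ∫ t in (0 : ℝ)..1, h t ^ N * t := by
  have hdiff : Differentiable ℝ h := hh.differentiable one_ne_zero
  have hderiv : Continuous (deriv h) := hh.continuous_deriv le_rfl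
  have hparts := intervalIntegral.integral_mul_deriv_eq_deriv_mul
    (u := fun t => t ^ 2) (v := fun t => h t ^ N) (a := 0) (b := 1)
    (fun t _ => by simpa using hasDerivAt_pow 2 t)
    (fun t _ => (hdiff t).hasDerivAt.pow N)
    ((by fun_prop : Continuous fun t : ℝ => 2 * t).intervalIntegrable 0 1)
    ((by fun_prop : Continuous fun t => (N : ℝ) * h t ^ (N - 1) * deriv h t).intervalIntegrable 0 1)
  calc ∫ t in (0 : ℝ)..1, h t ^ (N - 1) * deriv h t * t ^ 2
      = (N : ℝ)⁻¹ * ∫ t in (0 : ℝ)..1, t ^ 2 * (N * h t ^ (N - 1) * deriv h t) := by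
        rw [← intervalIntegral.integral_const_mul]
        congr 1 with t
        field_simp
    _ = -(2 / N) * ∫ t in (0 : ℝ)..1, h t ^ N * t := by
        have htwo : ∫ t in (0 : ℝ)..1, 2 * t * h t ^ N = 2 * ∫ t in (0 : ℝ)..1, h t ^ N * t := by
          rw [← intervalIntegral.integral_const_mul]
          congr 1 with t
          ring
        rw [hparts, h1, htwo, zero_pow hN]
        ring

end OneVariable

theorem tsupport_comp_norm_subset_closedBall {E : Type*} [SeminormedAddCommGroup E] {F : ℝ → ℝ}
    {R : ℝ} (hF : ∀ r, R < r → F r = 0) :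
    tsupport (fun x : E => F ‖x‖) ⊆ Metric.closedBall 0 R := by
  refine closure_minimal (fun x hx => ?_) Metric.isClosed_closedBall
  by_contra hxR
  exact hx (hF _ (by simpa using hxR))

section Radial

variable {E : Type*} [NormedAddCommGroup E] [InnerProductSpace ℝ E]

theorem hasFDerivAt_norm_of_ne_zero {x : E} (hx : x ≠ 0) :
    HasFDerivAt (‖·‖) (‖x‖⁻¹ • innerSL ℝ x) x := by
  have hr : 0 < ‖x‖ := norm_pos_iff.2 hx
  have hsqrt : HasDerivAt sqrt (1 / (2 * ‖x‖)) (‖x‖ ^ 2) := by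
    simpa [sqrt_sq hr.le] using hasDerivAt_sqrt (by positivity : ‖x‖ ^ 2 ≠ 0)
  have hcomp := hsqrt.comp_hasFDerivAt x (hasStrictFDerivAt_norm_sq x).hasFDerivAt
  have hfun : sqrt ∘ (fun y : E => ‖y‖ ^ 2) = (‖·‖) := funext fun y => sqrt_sq (norm_nonneg y)
  rw [hfun] at hcomp
  refine hcomp.congr_fderiv ?_
  ext v
  simp only [one_div, mul_inv_rev, smul_apply, innerSL_apply_apply, nsmul_eq_mul,
    Nat.cast_ofNat, smul_eq_mul]
  field_simp

theorem HasDerivAt.hasFDerivAt_comp_norm {F : ℝ → ℝ} {F' : ℝ} {x : E}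
    (hF : HasDerivAt F F' ‖x‖) (hx : x ≠ 0) :
    HasFDerivAt (fun y => F ‖y‖) ((F' / ‖x‖) • innerSL ℝ x) x := by
  have hcomp := hF.comp_hasFDerivAt x (hasFDerivAt_norm_of_ne_zero hx)
  rwa [smul_smul, ← div_eq_mul_inv] at hcomp

theorem ContDiff.comp_norm {F : ℝ → ℝ} {n : WithTop ℕ∞} {c : ℝ} (hF : ContDiff ℝ n F)
    (h0 : F =ᶠ[𝓝 0] fun _ => c) : ContDiff ℝ n (fun x : E => F ‖x‖) := by
  refine contDiff_iff_contDiffAt.2 fun x => ?_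
  rcases eq_or_ne x 0 with rfl | hx
  · have hnorm : Tendsto (‖·‖) (𝓝 (0 : E)) (𝓝 0) := by
      simpa using (continuous_norm (E := E)).tendsto 0
    exact contDiffAt_const.congr_of_eventuallyEq (hnorm.eventually h0)
  · exact hF.contDiffAt.comp x (contDiffAt_norm ℝ hx)

theorem fderiv_fderiv_comp_norm_apply {F A : ℝ → ℝ}
    (hF : ∀ t, 0 < t → HasDerivAt F (t * A t) t) (hA : ∀ t, 0 < t → DifferentiableAt ℝ A t)
    {x : E} (hx : x ≠ 0) (u v : E) :
    fderiv ℝ (fun y => fderiv ℝ (fun z => F ‖z‖) y v) x u =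
      A ‖x‖ * ⟪u, v⟫ + deriv A ‖x‖ / ‖x‖ * (⟪x, u⟫ * ⟪x, v⟫) := by
  have hgrad : (fun y => fderiv ℝ (fun z => F ‖z‖) y v) =ᶠ[𝓝 x] fun y => A ‖y‖ * ⟪v, y⟫ := by
    filter_upwards [isOpen_ne.mem_nhds hx] with y hy
    have hr : 0 < ‖y‖ := norm_pos_iff.2 hy
    rw [((hF _ hr).hasFDerivAt_comp_norm hy).fderiv]
    simp [hr.ne', real_inner_comm]
  have hprod : HasFDerivAt (fun y => A ‖y‖ * ⟪v, y⟫) _ x :=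
    ((hA _ (norm_pos_iff.2 hx)).hasDerivAt.hasFDerivAt_comp_norm hx).mul
      (innerSL ℝ v).hasFDerivAt
  rw [hgrad.fderiv_eq, hprod.fderiv]
  simp only [real_inner_comm, add_apply, smul_apply,
    innerSL_apply_apply, smul_eq_mul]
  ring

end Radial

theorem Matrix.det_smul_one_add_smul_vecMulVec {n : Type*} [Fintype n] [DecidableEq n]
    (hn : Fintype.card n ≠ 0) (a c : ℝ) (v : n → ℝ) :
    (a • (1 : Matrix n n ℝ) + c • vecMulVec v v).det =
      a ^ (Fintype.card n - 1) * (a + c * (v ⬝ᵥ v)) := by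
  obtain ⟨k, hk⟩ := Nat.exists_eq_succ_of_ne_zero hn
  have hunit : ∀ a ≠ 0, (a • (1 : Matrix n n ℝ) + c • vecMulVec v v).det =
      a ^ (Fintype.card n - 1) * (a + c * (v ⬝ᵥ v)) := by
    intro a ha
    have hfactor : a • (1 : Matrix n n ℝ) + c • vecMulVec v v =
        a • (1 + vecMulVec ((c / a) • v) v) := by
      rw [smul_add, smul_vecMulVec, smul_smul, mul_div_cancel₀ _ ha]
    rw [hfactor, det_smul, vecMulVec_eq (Fin 1), det_one_add_replicateCol_mul_replicateRow,
      dotProduct_smul, hk, Nat.succ_sub_one, pow_succ, smul_eq_mul]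
    field_simp
  refine congrFun (Continuous.ext_on (dense_compl_singleton 0) ?_ ?_ hunit) a
  · fun_prop
  · fun_prop

theorem hessDet_comp_norm {N : ℕ} (hN : N ≠ 0) {F A : ℝ → ℝ}
    (hF : ∀ t, 0 < t → HasDerivAt F (t * A t) t) (hA : ∀ t, 0 < t → DifferentiableAt ℝ A t)
    {x : Eu N} (hx : x ≠ 0) :
    hessDet (fun y => F ‖y‖) x = A ‖x‖ ^ (N - 1) * (A ‖x‖ + ‖x‖ * deriv A ‖x‖) := by
  have hmat : (Matrix.of fun i j => pd2 (fun y => F ‖y‖) i j x) =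
      A ‖x‖ • (1 : Matrix (Fin N) (Fin N) ℝ) + (deriv A ‖x‖ / ‖x‖) • Matrix.vecMulVec x x := by
    ext i j
    simp [pd2, ebasis, fderiv_fderiv_comp_norm_apply hF hA hx, Matrix.one_apply,
      Matrix.vecMulVec_apply, EuclideanSpace.inner_single_right, eq_comm]
  have hdot : (x : Fin N → ℝ) ⬝ᵥ x = ‖x‖ ^ 2 := by
    rw [← real_inner_self_eq_norm_sq, EuclideanSpace.inner_eq_star_dotProduct]
    simp
  rw [hessDet, hmat, Matrix.det_smul_one_add_smul_vecMulVec (by simpa using hN),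
    Fintype.card_fin, hdot]
  field_simp [norm_ne_zero_iff.2 hx]

theorem integral_hessDet_comp_norm_mul_norm_sq {N : ℕ} (hN : 2 ≤ N) {F h : ℝ → ℝ}
    (hh : Differentiable ℝ h) (hF : ∀ t, 0 < t → HasDerivAt F (h t) t)
    (hout : ∀ t, 1 ≤ t → h t = 0) :
    ∫ x : Eu N, hessDet (fun y => F ‖y‖) x * ‖x‖ ^ 2 =
      N * volume.real (Metric.ball (0 : Eu N) 1) *
        ∫ t in (0 : ℝ)..1, h t ^ (N - 1) * deriv h t * t ^ 2 := by
  set A : ℝ → ℝ := fun t => h t / t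
  have hA : ∀ t, 0 < t → DifferentiableAt ℝ A t := fun t ht =>
    (hh t).div differentiableAt_id ht.ne'
  have hFA : ∀ t, 0 < t → HasDerivAt F (t * A t) t := fun t ht => by
    simpa [A, mul_div_cancel₀ _ ht.ne'] using hF t ht
  have hradial : ∀ x : Eu N, hessDet (fun y => F ‖y‖) x * ‖x‖ ^ 2 =
      A ‖x‖ ^ (N - 1) * deriv h ‖x‖ * ‖x‖ ^ 2 := fun x => by
    rcases eq_or_ne x 0 with rfl | hx
    · simp
    · rw [hessDet_comp_norm (by omega) hFA hA hx,
        add_mul_deriv_div_self (hh _) (norm_ne_zero_iff.2 hx)]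
  have : Nonempty (Fin N) := ⟨⟨0, by omega⟩⟩
  have hpolar : ∀ t ∈ Set.Ioi (0 : ℝ), t ^ (N - 1) • (A t ^ (N - 1) * deriv h t * t ^ 2) =
      h t ^ (N - 1) * deriv h t * t ^ 2 := fun t ht => by
    simp only [A, smul_eq_mul, div_pow]
    field_simp [(pow_pos (Set.mem_Ioi.1 ht) (N - 1)).ne']
  rw [integral_congr_ae (Eventually.of_forall hradial),
    integral_fun_norm_addHaar volume (fun t => A t ^ (N - 1) * deriv h t * t ^ 2),
    finrank_euclideanSpace_fin, nsmul_eq_mul, smul_eq_mul, mul_assoc,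
    setIntegral_congr_fun measurableSet_Ioi hpolar,
    setIntegral_Ioi_eq_intervalIntegral zero_le_one fun t ht => by
      rw [hout t ht.le, zero_pow (by omega), zero_mul, zero_mul]]

theorem stmt7_general (N : ℕ) (hN : 2 ≤ N) (h : ℝ → ℝ)
    (hh : ContDiff ℝ (⊤ : ℕ∞) h)
    (hsupp : tsupport h ⊆ Set.Ioo 0 1)
    (hint : (∫ r in (0:ℝ)..1, h r) = 0)
    (g : Eu N → ℝ) (hg : ∀ x : Eu N, g x = ∫ s in (0:ℝ)..(‖x‖), h s) :
    (ContDiff ℝ (⊤ : ℕ∞) g ∧ HasCompactSupport g ∧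
      tsupport g ⊆ Metric.closedBall 0 1) ∧
    ∫ x : Eu N, hessDet g x * ‖x‖^2 =
      -(2 * ((N : ℝ) * (volume (Metric.ball (0 : Eu N) 1)).toReal) / (N : ℝ)) *
        ∫ r in (0:ℝ)..1, (h r)^N * r := by
  have h0 : h =ᶠ[𝓝 0] 0 := notMem_tsupport_iff_eventuallyEq.1 fun hmem => (hsupp hmem).1.ne rfl
  have hout : ∀ t, 1 ≤ t → h t = 0 := fun t ht =>
    image_eq_zero_of_notMem_tsupport fun hmem => (hsupp hmem).2.not_ge ht
  have hh1 : ContDiff ℝ 1 h := hh.of_le (by exact_mod_cast le_top)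
  obtain rfl : g = fun x => ∫ s in (0 : ℝ)..‖x‖, h s := funext hg
  have hball : tsupport (fun x : Eu N => ∫ s in (0 : ℝ)..‖x‖, h s) ⊆ Metric.closedBall 0 1 :=
    tsupport_comp_norm_subset_closedBall fun r hr =>
      primitive_eq_zero_of_one_le hh.continuous hout hint hr.le
  refine ⟨⟨hh.primitive.comp_norm (primitive_eventuallyEq_zero h0),
    (isCompact_closedBall 0 1).of_isClosed_subset (isClosed_tsupport _) hball, hball⟩, ?_⟩
  rw [integral_hessDet_comp_norm_mul_norm_sq hN (hh1.differentiable one_ne_zero)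
      (fun t _ => (hh.continuous.integral_hasStrictDerivAt 0 t).hasDerivAt) hout,
    integral_pow_mul_deriv_mul_sq hh1 (hout 1 le_rfl) (by omega), measureReal_def]
  field_simp

/-- The radial atom used in the scaling analysis: for `h ∈ C_c^∞((0,1))` with
`∫₀¹ h = 0` and `g(x) = ∫₀^{|x|} h`, the function `g` is smooth and compactly
supported in the closed unit ball, and
`∫ det(D²g) |x|² dx = −(2 ω_{N−1} / N) ∫₀¹ h(r)^N r dr`, where
`ω_{N−1} = N · vol(B₁)` is the surface measure of the unit sphere. -/
theorem stmt7 (N : ℕ) (hN : 2 ≤ N) (h : ℝ → ℝ)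
    (hh : ContDiff ℝ (⊤ : ℕ∞) h) (hhs : HasCompactSupport h)
    (hsupp : tsupport h ⊆ Set.Ioo 0 1)
    (hint : (∫ r in (0:ℝ)..1, h r) = 0)
    (g : Eu N → ℝ) (hg : ∀ x : Eu N, g x = ∫ s in (0:ℝ)..(‖x‖), h s) :
    (ContDiff ℝ (⊤ : ℕ∞) g ∧ HasCompactSupport g ∧
      tsupport g ⊆ Metric.closedBall 0 1) ∧
    ∫ x : Eu N, hessDet g x * ‖x‖^2 =
      -(2 * ((N : ℝ) * (volume (Metric.ball (0 : Eu N) 1)).toReal) / (N : ℝ)) *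
        ∫ r in (0:ℝ)..1, (h r)^N * r :=
  stmt7_general N hN h hh hsupp hint g hg
end
end

section
/- Let N ≥ 3 and let φ ∈ C_c^∞(ℝ^N) satisfy φ ≥ 0, supp φ ⊂ (0,2π)^N, and φ = 1 on some nonempty open set Ω' ⊂ (0,2π)^N. Then there exists c > 0 such that for every integer n ≥ 1, ∫_{ℝ^N} x_N^{N−2} (∏_{i=1}^{N−1} sin(n xᵢ))^{2(N−1)} (Σ_{j=1}^{N−1} cos²(n x_j)) φ(x) dx ≥ c. -/
open MeasureTheory Real Filter

noncomputable section

/-- The index of the last coordinate (`x_N`) of `ℝ^N`. -/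
def lastIdx (N : ℕ) (hN : 0 < N) : Fin N := ⟨N - 1, Nat.sub_lt hN Nat.one_pos⟩

/-- The lacunary sequence `n_ℓ = k^{N^{3ℓ}}`. -/
def nseq (N k l : ℕ) : ℕ := k ^ (N ^ (3 * l))

/-- `∏_{i=1}^{N-1} sin²(n xᵢ)`. -/
def gfun (N : ℕ) (n : ℝ) (x : Eu N) : ℝ :=
  ∏ i : Fin (N-1), (Real.sin (n * x (Fin.castLE (Nat.sub_le N 1) i)))^2

/-- The atom `f(x) = x_N ∏_{i=1}^{N-1} sin²(n xᵢ)`. -/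
def ffun (N : ℕ) (hN : 0 < N) (n : ℝ) (x : Eu N) : ℝ :=
  x (lastIdx N hN) * gfun N n x

/-- `w_k(x) = Σ_{ℓ=1}^k n_ℓ^{-(2-2/N)} ℓ^{-1/N} ∏_{i=1}^{N-1} sin²(n_ℓ xᵢ)`. -/
def wfun (N k : ℕ) (x : Eu N) : ℝ :=
  ∑ l ∈ Finset.Icc 1 k,
    ((nseq N k l : ℝ)) ^ (-(2 - 2/(N:ℝ))) * ((l : ℝ)) ^ (-(1/(N:ℝ))) * gfun N (nseq N k l) x

/-- `u_k(x) = χ(x) w_k(x) x_N`. -/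
def ufun (N : ℕ) (hN : 0 < N) (k : ℕ) (χ : Eu N → ℝ) (x : Eu N) : ℝ :=
  χ x * wfun N k x * x (lastIdx N hN)

/-- The `C²` norm: supremum of all partial derivatives of order `≤ 2`. -/
def C2norm {N : ℕ} (φ : Eu N → ℝ) : ℝ :=
  ⨆ x : Eu N, max |φ x| (max (‖iteratedFDeriv ℝ 1 φ x‖) (‖iteratedFDeriv ℝ 2 φ x‖))

/-- The `C¹` norm: supremum of all partial derivatives of order `≤ 1`. -/
def C1norm {N : ℕ} (φ : Eu N → ℝ) : ℝ :=
  ⨆ x : Eu N, max |φ x| (‖iteratedFDeriv ℝ 1 φ x‖)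

/-- Glue `x̂ ∈ ℝ^{N-1}` and `t ∈ ℝ` into the point `(x̂, t) ∈ ℝ^N`. -/
def glue (N : ℕ) (hN : 0 < N) (xh : Eu (N-1)) (t : ℝ) : Eu N :=
  WithLp.toLp 2 (fun i => if h : (i : ℕ) < N - 1 then xh ⟨i, h⟩ else t)

/-!
On a small cube `B ⊆ Ω'` on which `x_N` is bounded below by some `a > 0`, the integrand is at
least `a^{N-2} ∏_{i<N-1} sin^{2(N-1)}(n xᵢ) · cos²(n x₁)`, a product of functions of one
coordinate each. By Fubini the integral over `B` factors into one-dimensional integrals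
`∫_α^β g(n t) dt` of continuous nonnegative `π`-periodic functions `g` with countably many zeros.
Each of these is positive for every `n`, and for large `n` the interval `[nα, nβ]` contains at
least `n(β-α)/(2π)` full periods, so it is bounded below uniformly in `n`.
-/

open Set

theorem intervalIntegral_pos_of_countable_zeros {g : ℝ → ℝ} (hcont : Continuous g)
    (h0 : ∀ t, 0 ≤ g t) (hZ : {t | g t = 0}.Countable) {α β : ℝ} (hαβ : α < β) :
    0 < ∫ t in α..β, g t := by
  obtain ⟨t, hgt, ht⟩ := (hZ.dense_compl ℝ).exists_mem_open isOpen_Ioo (nonempty_Ioo.2 hαβ)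
  exact intervalIntegral.integral_pos hαβ hcont.continuousOn (fun s _ => h0 s)
    ⟨t, Ioo_subset_Icc_self ht, (h0 t).lt_of_ne (Ne.symm hgt)⟩

theorem exists_pos_forall_le_of_eventually_le {u : ℕ → ℝ} (hpos : ∀ n, 1 ≤ n → 0 < u n)
    {c : ℝ} (hc : 0 < c) (hev : ∀ᶠ n in atTop, c ≤ u n) :
    ∃ c' : ℝ, 0 < c' ∧ ∀ n, 1 ≤ n → c' ≤ u n := by
  obtain ⟨N, hN⟩ := eventually_atTop.1 hev
  obtain ⟨m, hm, hmin⟩ := (Finset.Icc 1 (max N 1)).exists_min_image u ⟨1, by simp⟩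
  refine ⟨min c (u m), lt_min hc (hpos m (Finset.mem_Icc.1 hm).1), fun n hn => ?_⟩
  rcases le_total N n with h | h
  · exact (min_le_left _ _).trans (hN n h)
  · exact (min_le_right _ _).trans
      (hmin n (Finset.mem_Icc.2 ⟨hn, h.trans (le_max_left _ _)⟩))

namespace Function.Periodic

variable {g : ℝ → ℝ} {T : ℝ}

theorem natCast_mul_intervalIntegral_le (hg : Periodic g T) (hcont : Continuous g)
    (h0 : ∀ t, 0 ≤ g t) {u v : ℝ} {m : ℕ} (h : u + m * T ≤ v) :
    m * ∫ t in (0)..T, g t ≤ ∫ t in u..v, g t := by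
  have hint : ∀ a b, IntervalIntegrable g volume a b := hcont.intervalIntegrable
  have hperiods : ∫ t in u..u + (m : ℤ) • T, g t = m * ∫ t in (0)..T, g t := by
    rw [hg.intervalIntegral_add_zsmul_eq _ _ hint, hg.intervalIntegral_add_eq u 0, zero_add,
      zsmul_eq_mul, Int.cast_natCast]
  rw [← hperiods, ← intervalIntegral.integral_add_adjacent_intervals (hint u _) (hint _ v),
    le_add_iff_nonneg_right]
  exact intervalIntegral.integral_nonneg (by simpa using h) fun t _ => h0 t

theorem mul_intervalIntegral_le_intervalIntegral_comp_mul (hg : Periodic g T) (hT : 0 < T)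
    (hcont : Continuous g) (h0 : ∀ t, 0 ≤ g t) {α β k : ℝ} (hk : 0 < k)
    (hkT : T ≤ k * (β - α)) :
    (β - α) / (2 * T) * ∫ t in (0)..T, g t ≤ ∫ t in α..β, g (k * t) := by
  set x := k * (β - α) / T
  set m := ⌊x⌋₊
  have hx : 1 ≤ x := (one_le_div hT).2 hkT
  have hxm : x ≤ 2 * m := by
    have := Nat.lt_floor_add_one x
    have : (1 : ℝ) ≤ m := by exact_mod_cast (Nat.one_le_floor_iff x).2 hx
    linarith
  have hperiods : k * α + m * T ≤ k * β := by
    have : m * T ≤ x * T := by gcongr; exact Nat.floor_le (by linarith)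
    rw [div_mul_cancel₀ _ hT.ne'] at this
    linarith
  have hJ : 0 ≤ ∫ t in (0)..T, g t := intervalIntegral.integral_nonneg hT.le fun t _ => h0 t
  rw [intervalIntegral.integral_comp_mul_left _ hk.ne', smul_eq_mul]
  calc (β - α) / (2 * T) * ∫ t in (0)..T, g t = k⁻¹ * (x / 2 * ∫ t in (0)..T, g t) := by
        simp only [x]; field_simp
    _ ≤ k⁻¹ * (m * ∫ t in (0)..T, g t) := by gcongr; linarith
    _ ≤ k⁻¹ * ∫ t in k * α..k * β, g t := by
        gcongr; exact hg.natCast_mul_intervalIntegral_le hcont h0 hperiods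

theorem exists_pos_le_intervalIntegral_comp_mul (hg : Periodic g T) (hT : 0 < T)
    (hcont : Continuous g) (h0 : ∀ t, 0 ≤ g t) (hZ : {t | g t = 0}.Countable) {α β : ℝ}
    (hαβ : α < β) :
    ∃ c : ℝ, 0 < c ∧ ∀ n : ℕ, 1 ≤ n → c ≤ ∫ t in α..β, g (n * t) := by
  have hJ : 0 < ∫ t in (0)..T, g t := intervalIntegral_pos_of_countable_zeros hcont h0 hZ hT
  refine exists_pos_forall_le_of_eventually_le (c := (β - α) / (2 * T) * ∫ t in (0)..T, g t)
    (fun n hn => ?_) (mul_pos (div_pos (sub_pos.2 hαβ) (by positivity)) hJ) ?_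
  · have hn : (n : ℝ) ≠ 0 := by positivity
    exact intervalIntegral_pos_of_countable_zeros (by fun_prop) (fun t => h0 _)
      (hZ.preimage (mul_right_injective₀ hn)) hαβ
  · have hlarge :=
      (tendsto_natCast_atTop_atTop.atTop_mul_const (sub_pos.2 hαβ)).eventually_ge_atTop T
    filter_upwards [hlarge, eventually_ge_atTop 1] with n hnT hn
    exact hg.mul_intervalIntegral_le_intervalIntegral_comp_mul hT hcont h0 (by positivity) hnT

end Function.Periodic

theorem EuclideanSpace.integral_fintype_prod_eq_prod {ι : Type*} [Fintype ι] (f : ι → ℝ → ℝ) :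
    ∫ x : EuclideanSpace ℝ ι, ∏ i, f i (x i) = ∏ i, ∫ t, f i t := by
  rw [← (PiLp.volume_preserving_toLp ι).integral_comp
    (MeasurableEquiv.toLp 2 _).measurableEmbedding]
  exact integral_fintype_prod_volume_eq_prod f

theorem EuclideanSpace.exists_pos_le_integral_prod_indicator_comp_mul {ι : Type*} [Fintype ι]
    {g : ι → ℝ → ℝ} {T : ℝ} (hT : 0 < T) (hper : ∀ i, Function.Periodic (g i) T)
    (hcont : ∀ i, Continuous (g i)) (h0 : ∀ i t, 0 ≤ g i t)
    (hZ : ∀ i, {t | g i t = 0}.Countable) {a b : ι → ℝ} (hab : ∀ i, a i < b i) :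
    ∃ c : ℝ, 0 < c ∧ ∀ n : ℕ, 1 ≤ n →
      c ≤ ∫ x : EuclideanSpace ℝ ι,
        ∏ i, (Ioo (a i) (b i)).indicator (fun t => g i (n * t)) (x i) := by
  choose c hc hcn using fun i =>
    (hper i).exists_pos_le_intervalIntegral_comp_mul hT (hcont i) (h0 i) (hZ i) (hab i)
  refine ⟨∏ i, c i, Finset.prod_pos fun i _ => hc i, fun n hn => ?_⟩
  rw [EuclideanSpace.integral_fintype_prod_eq_prod]
  refine Finset.prod_le_prod (fun i _ => (hc i).le) fun i _ => ?_
  simpa only [integral_indicator measurableSet_Ioo, intervalIntegral.integral_of_le (hab i).le,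
    integral_Ioc_eq_integral_Ioo] using hcn i n hn

theorem EuclideanSpace.exists_pos_forall_abs_sub_lt_mem {ι : Type*} [Fintype ι]
    {U : Set (EuclideanSpace ℝ ι)} (hU : IsOpen U) {z : EuclideanSpace ℝ ι} (hz : z ∈ U) :
    ∃ ε : ℝ, 0 < ε ∧ ∀ x : EuclideanSpace ℝ ι, (∀ i, |x i - z i| < ε) → x ∈ U := by
  obtain ⟨ε, hε, hball⟩ :=
    Metric.isOpen_iff.1 (hU.preimage (PiLp.continuous_toLp 2 _)) z.ofLp hz
  refine ⟨ε, hε, fun x hx => hball ?_⟩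
  rw [Metric.mem_ball, dist_pi_lt_iff hε]
  exact fun i => by simpa [Real.dist_eq] using hx i

def sinCosPow (a b : ℕ) (t : ℝ) : ℝ := sin t ^ (2 * a) * cos t ^ (2 * b)

theorem continuous_sinCosPow (a b : ℕ) : Continuous (sinCosPow a b) := by
  unfold sinCosPow; fun_prop

theorem sinCosPow_nonneg (a b : ℕ) (t : ℝ) : 0 ≤ sinCosPow a b t :=
  mul_nonneg ((even_two_mul a).pow_nonneg _) ((even_two_mul b).pow_nonneg _)

theorem periodic_sinCosPow (a b : ℕ) : Function.Periodic (sinCosPow a b) π := fun t => by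
  simp [sinCosPow, sin_add_pi, cos_add_pi, (even_two_mul _).neg_pow]

theorem countable_sinCosPow_eq_zero (a b : ℕ) : {t | sinCosPow a b t = 0}.Countable := by
  refine (countable_range fun k : ℤ => k * π / 2).mono fun t ht => ?_
  have h2t : sin (2 * t) = 0 := by
    rcases mul_eq_zero.1 ht with h | h <;> simp [sin_two_mul, pow_eq_zero_iff'.1 h]
  obtain ⟨k, hk⟩ := sin_eq_zero_iff.1 h2t
  exact ⟨k, by simp only; linarith⟩

def coordWeight (M : ℕ) (j : Fin (M + 2)) : ℝ → ℝ :=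
  sinCosPow (if j = Fin.last (M + 1) then 0 else M + 1) (if j = 0 then 1 else 0)

theorem prod_coordWeight (M : ℕ) (s : Fin (M + 2) → ℝ) :
    ∏ j, coordWeight M j (s j) =
      (∏ i : Fin (M + 1), sin (s i.castSucc)) ^ (2 * (M + 1)) * cos (s (Fin.castSucc 0)) ^ 2 := by
  have hlast : Fin.last (M + 1) ≠ 0 := Fin.last_pos.ne'
  rw [Fin.prod_univ_castSucc]
  simp only [coordWeight, sinCosPow, Fin.castSucc_ne_last, if_false, if_true, hlast,
    Fin.castSucc_eq_zero_iff, mul_zero, pow_zero, mul_one, Finset.prod_mul_distrib,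
    Finset.prod_pow]
  congr 1
  rw [Finset.prod_eq_single 0 (fun i _ hi => by simp [hi]) (by simp)]
  simp

theorem pow_mul_prod_coordWeight_le {M : ℕ} {a : ℝ} (ha : 0 ≤ a) (n : ℝ) {x : Eu (M + 2)}
    (hax : a ≤ x (Fin.last (M + 1))) :
    a ^ M * ∏ j, coordWeight M j (n * x j) ≤
      x (Fin.last (M + 1)) ^ M * (∏ i : Fin (M + 1), sin (n * x i.castSucc)) ^ (2 * (M + 1)) *
        ∑ j : Fin (M + 1), cos (n * x j.castSucc) ^ 2 := by
  rw [prod_coordWeight M (fun j => n * x j), mul_assoc]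
  have hcos : cos (n * x (Fin.castSucc 0)) ^ 2 ≤ ∑ j : Fin (M + 1), cos (n * x j.castSucc) ^ 2 :=
    Finset.single_le_sum (f := fun j : Fin (M + 1) => cos (n * x j.castSucc) ^ 2)
      (fun j _ => sq_nonneg _) (Finset.mem_univ 0)
  have hx : 0 ≤ x (Fin.last (M + 1)) := ha.trans hax
  have hsin : 0 ≤ (∏ i : Fin (M + 1), sin (n * x i.castSucc)) ^ (2 * (M + 1)) :=
    (even_two_mul _).pow_nonneg _
  gcongr

theorem lastCoord_pow_mul_sinProd_mul_cosSum_mul_nonneg {M : ℕ} {φ : Eu (M + 2) → ℝ}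
    (hφ0 : ∀ x, 0 ≤ φ x) (hφsupp : ∀ x ∈ tsupport φ, 0 < x (Fin.last (M + 1))) (n : ℝ)
    (x : Eu (M + 2)) :
    0 ≤ x (Fin.last (M + 1)) ^ M * (∏ i : Fin (M + 1), sin (n * x i.castSucc)) ^ (2 * (M + 1)) *
      (∑ j : Fin (M + 1), cos (n * x j.castSucc) ^ 2) * φ x := by
  rcases eq_or_ne (φ x) 0 with hφx | hφx
  · simp [hφx]
  have hx := (hφsupp x (subset_tsupport φ hφx)).le
  have hsin : 0 ≤ (∏ i : Fin (M + 1), sin (n * x i.castSucc)) ^ (2 * (M + 1)) :=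
    (even_two_mul _).pow_nonneg _
  have hcos : 0 ≤ ∑ j : Fin (M + 1), cos (n * x j.castSucc) ^ 2 :=
    Finset.sum_nonneg fun j _ => sq_nonneg _
  have := hφ0 x
  positivity

theorem exists_pos_le_integral_lastCoord_pow_mul_sinProd_mul_cosSum (M : ℕ)
    {φ : Eu (M + 2) → ℝ} (hφ : Continuous φ) (hφs : HasCompactSupport φ) (hφ0 : ∀ x, 0 ≤ φ x)
    (hφsupp : ∀ x ∈ tsupport φ, 0 < x (Fin.last (M + 1)))
    {Ω' : Set (Eu (M + 2))} (hΩ' : IsOpen Ω') {z : Eu (M + 2)} (hz : z ∈ Ω')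
    (hzpos : 0 < z (Fin.last (M + 1))) (hφ1 : ∀ x ∈ Ω', φ x = 1) :
    ∃ c : ℝ, 0 < c ∧ ∀ n : ℕ, 1 ≤ n →
      c ≤ ∫ x : Eu (M + 2), x (Fin.last (M + 1)) ^ M *
          (∏ i : Fin (M + 1), sin (n * x i.castSucc)) ^ (2 * (M + 1)) *
          (∑ j : Fin (M + 1), cos (n * x j.castSucc) ^ 2) * φ x := by
  set a := z (Fin.last (M + 1)) / 2 with ha
  obtain ⟨ε, hε, hεU⟩ := EuclideanSpace.exists_pos_forall_abs_sub_lt_mem hΩ' hz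
  set r := min ε a
  have hr : 0 < r := lt_min hε (by positivity)
  obtain ⟨c, hc, hcn⟩ := EuclideanSpace.exists_pos_le_integral_prod_indicator_comp_mul pi_pos
    (fun j => periodic_sinCosPow _ _) (fun j => continuous_sinCosPow _ _)
    (fun j => sinCosPow_nonneg _ _) (fun j => countable_sinCosPow_eq_zero _ _)
    (g := coordWeight M) (a := fun j => z j - r) (b := fun j => z j + r) (fun j => by linarith)
  refine ⟨a ^ M * c, by positivity, fun n hn => ?_⟩
  set F : Eu (M + 2) → ℝ := fun x => x (Fin.last (M + 1)) ^ M *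
    (∏ i : Fin (M + 1), sin (n * x i.castSucc)) ^ (2 * (M + 1)) *
    (∑ j : Fin (M + 1), cos (n * x j.castSucc) ^ 2) * φ x
  set L : Eu (M + 2) → ℝ := fun x =>
    a ^ M * ∏ j, (Ioo (z j - r) (z j + r)).indicator (fun t => coordWeight M j (n * t)) (x j)
  have hF0 : ∀ x, 0 ≤ F x := lastCoord_pow_mul_sinProd_mul_cosSum_mul_nonneg hφ0 hφsupp n
  have hL0 : ∀ x, 0 ≤ L x := fun x => mul_nonneg (by positivity)
    (Finset.prod_nonneg fun j _ => indicator_nonneg (fun t _ => sinCosPow_nonneg _ _ _) _)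
  have hLF : ∀ x, L x ≤ F x := by
    intro x
    by_cases hx : ∀ j, x j ∈ Ioo (z j - r) (z j + r)
    · have hxΩ : x ∈ Ω' := hεU x fun j => abs_sub_lt_iff.2
        ⟨by linarith [(hx j).2, min_le_left ε a], by linarith [(hx j).1, min_le_left ε a]⟩
      have hxa : a ≤ x (Fin.last (M + 1)) := by linarith [(hx (Fin.last _)).1, min_le_right ε a]
      simp only [L, F, Finset.prod_congr rfl fun j _ => indicator_of_mem (hx j) _, hφ1 x hxΩ,
        mul_one]
      exact pow_mul_prod_coordWeight_le (by positivity) n hxa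
    · obtain ⟨j, hj⟩ := not_forall.1 hx
      calc L x = 0 := by
            simp only [L]
            rw [Finset.prod_eq_zero (Finset.mem_univ j) (indicator_of_notMem hj _), mul_zero]
        _ ≤ F x := hF0 x
  have hFint : Integrable F :=
    (by fun_prop : Continuous F).integrable_of_hasCompactSupport hφs.mul_left
  calc a ^ M * c
      ≤ a ^ M * ∫ x : Eu (M + 2),
          ∏ j, (Ioo (z j - r) (z j + r)).indicator (fun t => coordWeight M j (n * t)) (x j) := by
        gcongr; exact hcn n hn
    _ = ∫ x, L x := (integral_const_mul _ _).symm
    _ ≤ ∫ x, F x := integral_mono_of_nonneg (ae_of_all _ hL0) hFint (ae_of_all _ hLF)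

/-- The main-term lower bound: there is `c > 0` such that for every `n ≥ 1`,
`∫ x_N^{N-2} (∏ sin(n xᵢ))^{2(N-1)} (Σ cos²(n x_j)) φ dx ≥ c`. -/
theorem stmt13 (N : ℕ) (hN : 3 ≤ N)
    (φ : Eu N → ℝ) (hφ : ContDiff ℝ (⊤ : ℕ∞) φ) (hφs : HasCompactSupport φ)
    (hφ0 : ∀ x, 0 ≤ φ x)
    (hφsupp : tsupport φ ⊆ {x : Eu N | ∀ i, x i ∈ Set.Ioo 0 (2*π)})
    (Ω' : Set (Eu N)) (hΩ'o : IsOpen Ω') (hΩ'ne : Ω'.Nonempty)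
    (hΩ'sub : Ω' ⊆ {x : Eu N | ∀ i, x i ∈ Set.Ioo 0 (2*π)})
    (hφ1 : ∀ x ∈ Ω', φ x = 1) :
    ∃ c : ℝ, 0 < c ∧ ∀ n : ℕ, 1 ≤ n →
      c ≤ ∫ x : Eu N,
          (x (lastIdx N (by omega)))^(N-2) *
          (∏ i : Fin (N-1), Real.sin ((n : ℝ) * x (Fin.castLE (Nat.sub_le N 1) i)))^(2*(N-1)) *
          (∑ j : Fin (N-1), (Real.cos ((n : ℝ) * x (Fin.castLE (Nat.sub_le N 1) j)))^2) *
          φ x := by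
  obtain ⟨M, rfl⟩ : ∃ M, N = M + 2 := ⟨N - 2, by omega⟩
  obtain ⟨z, hz⟩ := hΩ'ne
  exact exists_pos_le_integral_lastCoord_pow_mul_sinProd_mul_cosSum M hφ.continuous hφs hφ0
    (fun x hx => (hφsupp hx _).1) hΩ'o hz (hΩ'sub hz _).1 hφ1
end
end

section
/- Fix N ≥ 3 and an integer k ≥ 2, set n_ℓ = k^{N^{3ℓ}} and f_ℓ(x) = x_N ∏_{i=1}^{N−1} sin²(n_ℓ xᵢ). Let 𝓵 = (ℓ₁,…,ℓ_N) ∈ {1,…,k}^N have not all entries equal, let H_𝓵(x) be the N×N matrix with (i,j) entry ∂ᵢ∂ⱼ f_{ℓᵢ}(x), set ℓ* = max_i ℓᵢ, I = {i : ℓᵢ = ℓ*}, and m = #I. Then for every subset J ⊆ {1,…,N} with #J = m and #(I ∩ J) ≤ m − 2, and for every x ∈ ℝ^N, det(H_𝓵^{(I,J)}(x)) = 0, where H_𝓵^{(I,J)} denotes the m×m submatrix of H_𝓵 with rows indexed by I and columns indexed by J. -/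
open MeasureTheory Real Filter

noncomputable section

/-
Each `f_ℓ` is a separable product `∏ᵣ gᵣ(xᵣ)` of one-variable functions (`g_N = id`,
`gᵣ = sin²(n_ℓ ·)` otherwise), whose mixed second partials are `∂ᵢ∂ⱼ f = gᵢ' gⱼ' ∏_{r ≠ i,j} gᵣ`.
All rows of `H_𝓵^{(I,J)}` are rows of the Hessian of the single function `f_{ℓ*}`, and
`#(I ∩ J) ≤ m - 2` provides two rows `i₁ ≠ i₂` of `I` outside `J`. On the columns `j ∉ {i₁, i₂}`
these two Hessian rows are linearly dependent, so the determinant vanishes.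
-/

open Finset

section SeparableProduct

variable {N : ℕ}

def separableProd (g : Fin N → ℝ → ℝ) (x : Eu N) : ℝ := ∏ r, g r (x r)

lemma prod_update_apply (g : Fin N → ℝ → ℝ) (i : Fin N) (a : ℝ → ℝ) (x : Eu N) :
    ∏ r, Function.update g i a r (x r) = a (x i) * ∏ r ∈ univ.erase i, g r (x r) := by
  rw [← mul_prod_erase _ _ (mem_univ i), Function.update_self]
  congr 1
  exact prod_congr rfl fun r hr => by rw [Function.update_of_ne (ne_of_mem_erase hr)]

lemma hasFDerivAt_separableProd (g : Fin N → ℝ → ℝ) (x : Eu N)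
    (hg : ∀ r, DifferentiableAt ℝ (g r) (x r)) :
    HasFDerivAt (separableProd g)
      (∑ r, (∏ s ∈ univ.erase r, g s (x s)) •
        deriv (g r) (x r) • (EuclideanSpace.proj r : Eu N →L[ℝ] ℝ)) x :=
  HasFDerivAt.finsetProd fun r _ =>
    (hg r).hasDerivAt.comp_hasFDerivAt x (EuclideanSpace.proj (𝕜 := ℝ) r).hasFDerivAt

lemma pd_separableProd (g : Fin N → ℝ → ℝ) (hg : ∀ r, Differentiable ℝ (g r)) (j : Fin N) :
    pd (separableProd g) j = separableProd (Function.update g j (deriv (g j))) := by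
  funext y
  rw [pd, (hasFDerivAt_separableProd g y fun r => hg r _).fderiv, separableProd,
    prod_update_apply]
  simp only [FunLike.coe_sum, Finset.sum_apply, smul_apply, ebasis]
  rw [sum_eq_single j (fun r _ hr => by simp [hr]) (by simp)]
  simp [mul_comm]

lemma pd2_separableProd_of_ne (g : Fin N → ℝ → ℝ) (hg : ∀ r, Differentiable ℝ (g r))
    {i j : Fin N} (hij : i ≠ j) (hg' : Differentiable ℝ (deriv (g j))) (x : Eu N) :
    pd2 (separableProd g) i j x
      = deriv (g i) (x i) * deriv (g j) (x j) * ∏ r ∈ (univ.erase j).erase i, g r (x r) := by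
  have hG : ∀ r, Differentiable ℝ (Function.update g j (deriv (g j)) r) := by
    intro r
    rcases eq_or_ne r j with rfl | hr
    · simpa using hg'
    · simpa [hr] using hg r
  change pd (pd (separableProd g) j) i x = _
  rw [pd_separableProd g hg, pd_separableProd _ hG, separableProd, Function.update_of_ne hij,
    prod_update_apply, ← mul_prod_erase _ _ (mem_erase.mpr ⟨hij.symm, mem_univ j⟩),
    Function.update_self, erase_right_comm, ← mul_assoc]
  exact congrArg _ <| prod_congr rfl fun r hr => by
    rw [Function.update_of_ne (ne_of_mem_erase (mem_of_mem_erase hr))]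

/-- Multiplying row `i` by `gᵢ(xᵢ)` turns its entry in column `j ≠ i` into
`gᵢ'(xᵢ) gⱼ'(xⱼ) ∏_{r ≠ j} gᵣ(xᵣ)`, so the rows `i₁, i₂` are proportional off the columns
`i₁, i₂`; if the coefficient `g_{i₁}(x_{i₁}) g_{i₂}'(x_{i₂})` vanishes, row `i₂` vanishes there. -/
lemma exists_pd2_separableProd_rows_dependent (g : Fin N → ℝ → ℝ)
    (hg : ∀ r, ContDiff ℝ 2 (g r)) (x : Eu N) {i₁ i₂ : Fin N} (h12 : i₁ ≠ i₂) :
    ∃ α β : ℝ, (α ≠ 0 ∨ β ≠ 0) ∧ ∀ j, j ≠ i₁ → j ≠ i₂ →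
      α * pd2 (separableProd g) i₁ j x = β * pd2 (separableProd g) i₂ j x := by
  have hd : ∀ r, Differentiable ℝ (g r) := fun r => (hg r).differentiable (by norm_num)
  have hd' : ∀ r, Differentiable ℝ (deriv (g r)) := fun r =>
    ((contDiff_succ_iff_deriv (n := 1)).mp (hg r)).2.2.differentiable (by norm_num)
  have hH : ∀ {i j}, j ≠ i → pd2 (separableProd g) i j x
      = deriv (g i) (x i) * deriv (g j) (x j) * ∏ r ∈ (univ.erase j).erase i, g r (x r) :=
    fun hji => pd2_separableProd_of_ne g hd (Ne.symm hji) (hd' _) x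
  by_cases hα : g i₁ (x i₁) * deriv (g i₂) (x i₂) = 0
  · refine ⟨0, 1, Or.inr one_ne_zero, fun j hj1 hj2 => ?_⟩
    rw [zero_mul, one_mul, hH hj2]
    rcases mul_eq_zero.mp hα with h | h
    · rw [prod_eq_zero (mem_erase.mpr ⟨h12, mem_erase.mpr ⟨hj1.symm, mem_univ _⟩⟩) h, mul_zero]
    · rw [h, zero_mul, zero_mul]
  · refine ⟨_, g i₂ (x i₂) * deriv (g i₁) (x i₁), Or.inl hα, fun j hj1 hj2 => ?_⟩
    have key : ∀ {i}, j ≠ i → g i (x i) * pd2 (separableProd g) i j x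
        = deriv (g i) (x i) * deriv (g j) (x j) * ∏ r ∈ univ.erase j, g r (x r) := by
      intro i hji
      rw [hH hji, ← mul_prod_erase _ _ (mem_erase.mpr ⟨hji.symm, mem_univ i⟩)]
      ring
    linear_combination deriv (g i₂) (x i₂) * key hj1 - deriv (g i₁) (x i₁) * key hj2

end SeparableProduct

lemma Matrix.det_eq_zero_of_rows_dependent {K n : Type*} [Field K] [Fintype n] [DecidableEq n]
    (M : Matrix n n K) {a₁ a₂ : n} (ha : a₁ ≠ a₂) {α β : K} (hαβ : α ≠ 0 ∨ β ≠ 0)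
    (h : ∀ b, α * M a₁ b = β * M a₂ b) : M.det = 0 := by
  refine Matrix.exists_vecMul_eq_zero_iff.mp ⟨Pi.single a₁ α - Pi.single a₂ β, ?_, ?_⟩
  · intro hv
    have h₁ := congr_fun hv a₁
    have h₂ := congr_fun hv a₂
    simp [ha, ha.symm] at h₁ h₂
    tauto
  · ext b
    simp [Matrix.vecMul, dotProduct, sub_mul, Pi.single_apply, h b]

lemma det_pd2_separableProd_eq_zero {N m : ℕ} (g : Fin N → ℝ → ℝ)
    (hg : ∀ r, ContDiff ℝ 2 (g r)) (x : Eu N) (ρ κ : Fin m → Fin N) {a₁ a₂ : Fin m}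
    (h12 : ρ a₁ ≠ ρ a₂) (h₁ : ∀ b, κ b ≠ ρ a₁) (h₂ : ∀ b, κ b ≠ ρ a₂) :
    (Matrix.of fun a b => pd2 (separableProd g) (ρ a) (κ b) x).det = 0 := by
  obtain ⟨α, β, hαβ, h⟩ := exists_pd2_separableProd_rows_dependent g hg x h12
  exact Matrix.det_eq_zero_of_rows_dependent _ (fun h => h12 (congrArg ρ h)) hαβ
    fun b => h (κ b) (h₁ b) (h₂ b)

def ffunFactor (N : ℕ) (hN : 0 < N) (n : ℝ) (r : Fin N) : ℝ → ℝ :=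
  if r = lastIdx N hN then id else fun s => Real.sin (n * s) ^ 2

lemma contDiff_ffunFactor (N : ℕ) (hN : 0 < N) (n : ℝ) (r : Fin N) :
    ContDiff ℝ 2 (ffunFactor N hN n r) := by
  unfold ffunFactor
  split_ifs
  · exact contDiff_id
  · fun_prop

lemma ffun_eq_separableProd (N : ℕ) (hN : 0 < N) (n : ℝ) :
    ffun N hN n = separableProd (ffunFactor N hN n) := by
  funext x
  rw [separableProd, ← mul_prod_erase _ _ (mem_univ (lastIdx N hN)), ffun, gfun]
  simp only [ffunFactor, if_pos, id]
  congr 1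
  refine prod_bij (fun t _ => Fin.castLE (Nat.sub_le N 1) t) (fun t _ => ?_)
    (fun _ _ _ _ h => Fin.castLE_injective _ h) (fun r hr => ?_) (fun t _ => ?_)
  · simp [Fin.ext_iff, lastIdx]
    omega
  · have hr' : (r : ℕ) < N - 1 := by
      have := ne_of_mem_erase hr
      simp [Fin.ext_iff, lastIdx] at this
      omega
    exact ⟨⟨r, hr'⟩, mem_univ _, rfl⟩
  · rw [if_neg]
    simp [Fin.ext_iff, lastIdx]
    omega

/-- Lemma 5.3: if `#(I ∩ J) ≤ m − 2` then the submatrix determinant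
`det(H_𝓵^{(I,J)})` vanishes identically. -/
theorem stmt15 (N : ℕ) (hN : 3 ≤ N) (k : ℕ)
    (l : Fin N → ℕ)
    (lstar : ℕ)
    (I : Finset (Fin N)) (hI : I = Finset.filter (fun i => l i = lstar) Finset.univ)
    (m : ℕ) (hm : I.card = m)
    (J : Finset (Fin N)) (hJ : J.card = m)
    (hIJ : ((I ∩ J).card : ℤ) ≤ (m : ℤ) - 2)
    (x : Eu N) :
    (Matrix.of fun (a b : Fin m) =>
      pd2 (ffun N (by omega) ((nseq N k (l ((I.orderIsoOfFin hm a) : Fin N)) : ℝ)))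
        ((I.orderIsoOfFin hm a) : Fin N) ((J.orderIsoOfFin hJ b) : Fin N) x).det = 0 := by
  have hIl : ∀ i ∈ I, l i = lstar := by
    rw [hI]
    exact fun i hi => (mem_filter.mp hi).2
  have hl : ∀ a, l (I.orderIsoOfFin hm a) = lstar := fun a => hIl _ (I.orderIsoOfFin hm a).2
  obtain ⟨i₁, hi₁, i₂, hi₂, h12⟩ : ∃ i₁ ∈ I \ J, ∃ i₂ ∈ I \ J, i₁ ≠ i₂ := by
    refine one_lt_card.mp ?_
    have := card_sdiff_add_card_inter I J
    omega
  rw [Finset.mem_sdiff] at hi₁ hi₂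
  have hJcol : ∀ {i}, i ∉ J → ∀ b, (J.orderIsoOfFin hJ b : Fin N) ≠ i :=
    fun hi b h => hi (h ▸ (J.orderIsoOfFin hJ b).2)
  simp only [hl, ffun_eq_separableProd]
  refine det_pd2_separableProd_eq_zero _ (contDiff_ffunFactor N _ _) x _ _
    (a₁ := (I.orderIsoOfFin hm).symm ⟨i₁, hi₁.1⟩) (a₂ := (I.orderIsoOfFin hm).symm ⟨i₂, hi₂.1⟩)
    ?_ (by simpa using hJcol hi₁.2) (by simpa using hJcol hi₂.2)
  simpa using h12
end
end
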